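/- arXiv:1707.09912 — 4 statements merged into one kernel-verified Lean document; each statement's English description precedes it below -/
import Mathlib

section
/- Let X be a real normed space, M a nonempty subset of X, and S, T : M → M self-mappings. Suppose (i) (S,T) is a generalized JH-operator pair with order n₀ for some n₀ ∈ ℕ, and (ii) for each x, y ∈ M, ψ(∫₀^{‖Tx−Ty‖} φ(t)dt) ≤ F(ψ(∫₀^{γ(m₂(x,y))} φ(t)dt), φᵤ(∫₀^{γ(m₂(x,y))} φ(t)dt)), where ψ is an altering distance function, φᵤ is an ultra altering distance function, F is a C-class function, and the triple (ψ, φᵤ, F) is monotone. Then Fix(S) ∩ Fix(T) ≠ ∅. -/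
/-!
If `w₁ ≠ w₂` were two points of coincidence, `w₁ = Sx₁ = Tx₁` and `w₂ = Sx₂ = Tx₂`, then
`m₂(x₁, x₂) = d := ‖w₁ - w₂‖ > 0` and the contractive condition would give
`ψ(Φ(d)) ≤ F(ψ(Φ(γ d)), φᵤ(Φ(γ d))) < ψ(Φ(γ d)) ≤ ψ(Φ(d))`, where `Φ(r) = ∫₀^r φ`.
Hence `PC(S,T)` has diameter `0`, and the JH-condition of order `n₀ ≥ 1` gives a
coincidence point `x` with `‖Sx - x‖ ≤ 0`, i.e. a common fixed point.
-/

open MeasureTheory Filter Topology Set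

noncomputable section

/-- The integral `∫₀^a φ(t) dt`. -/
def intPhi (phi : ℝ → ℝ) (a : ℝ) : ℝ := ∫ t in (0:ℝ)..a, phi t

/-- `φ : [0,∞) → [0,∞)` is Lebesgue integrable, summable, nonnegative, with
`∫₀^ε φ(t)dt > 0` for all `ε > 0`. -/
def PhiAdmissible (phi : ℝ → ℝ) : Prop :=
  (∀ t ≥ (0:ℝ), 0 ≤ phi t) ∧ (∀ b : ℝ, IntervalIntegrable phi volume 0 b) ∧
  ∀ ε > (0:ℝ), 0 < intPhi phi ε

/-- Altering distance function: nondecreasing, continuous, `ψ t = 0 ↔ t = 0` on `[0,∞)`. -/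
def AlteringDistance (ψ : ℝ → ℝ) : Prop :=
  MonotoneOn ψ (Ici 0) ∧ ContinuousOn ψ (Ici 0) ∧ ∀ t ≥ (0:ℝ), (ψ t = 0 ↔ t = 0)

/-- Ultra altering distance function: continuous, nondecreasing, positive on `(0,∞)`,
nonnegative at `0`. -/
def UltraAltering (φu : ℝ → ℝ) : Prop :=
  ContinuousOn φu (Ici 0) ∧ MonotoneOn φu (Ici 0) ∧ (∀ t > (0:ℝ), 0 < φu t) ∧ 0 ≤ φu 0

/-- C-class function: continuous on `[0,∞)²`, `F s t ≤ s`, and `F s t = s → s = 0 ∨ t = 0`. -/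
def CClassFun (F : ℝ → ℝ → ℝ) : Prop :=
  ContinuousOn (Function.uncurry F) (Ici 0 ×ˢ Ici 0) ∧
  (∀ s ≥ (0:ℝ), ∀ t ≥ (0:ℝ), F s t ≤ s) ∧
  (∀ s ≥ (0:ℝ), ∀ t ≥ (0:ℝ), F s t = s → s = 0 ∨ t = 0)

/-- The triple `(ψ, φᵤ, F)` is monotone. -/
def MonotoneTriple (ψ φu : ℝ → ℝ) (F : ℝ → ℝ → ℝ) : Prop :=
  ∀ x y : ℝ, 0 ≤ x → x ≤ y → F (ψ x) (φu x) ≤ F (ψ y) (φu y)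

/-- The triple `(ψ, φᵤ, F)` is strictly monotone. -/
def StrictMonotoneTriple (ψ φu : ℝ → ℝ) (F : ℝ → ℝ → ℝ) : Prop :=
  ∀ x y : ℝ, 0 ≤ x → x < y → F (ψ x) (φu x) < F (ψ y) (φu y)

/-- `γ : (0,∞) → (0,∞)` is nondecreasing with `γ t < t` for all `t > 0`. -/
def GammaAdmissible (γ : ℝ → ℝ) : Prop :=
  (∀ t > (0:ℝ), 0 < γ t) ∧ MonotoneOn γ (Ioi 0) ∧ ∀ t > (0:ℝ), γ t < t

variable {X : Type*} [NormedAddCommGroup X] [NormedSpace ℝ X]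

/-- Fixed points of `T` lying in `M`. -/
def FixOn (T : X → X) (M : Set X) : Set X := {x ∈ M | T x = x}

/-- Points of coincidence `PC(S,T)` of the pair `(S,T)` over the set `M`. -/
def PCset (S T : X → X) (M : Set X) : Set X := {w | ∃ x ∈ M, S x = w ∧ T x = w}

/-- `(S,T)` is a generalized JH-operator pair with order `n` on `M`:
there is `x ∈ M` and `w = Sx = Tx ∈ PC(S,T)` with `‖w - x‖ ≤ (δ(PC(S,T)))ⁿ`. -/
def GenJHOp (S T : X → X) (M : Set X) (n : ℕ) : Prop :=
  ∃ x ∈ M, S x = T x ∧ ‖S x - x‖ ≤ Metric.diam (PCset S T M) ^ n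

/-- `(S,T)` is a generalized JH-suboperator pair with order `n` on `M` (w.r.t. `q`):
for each `k ∈ [0,1]`, `(S, T_k)` with `T_k x = (1-k)q + kTx` is a generalized JH-operator
pair with order `n`. -/
def GenJHSubOp (S T : X → X) (M : Set X) (q : X) (n : ℕ) : Prop :=
  ∀ k ∈ Icc (0:ℝ) 1, GenJHOp S (fun x => (1 - k) • q + k • T x) M n

/-- `M` is `q`-starshaped. -/
def Starshaped (M : Set X) (q : X) : Prop :=
  q ∈ M ∧ ∀ x ∈ M, segment ℝ q x ⊆ M

def m1 (S T : X → X) (x y : X) : ℝ :=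
  max (max ‖S x - S y‖ ‖S x - T x‖)
    (max ‖S y - T y‖ ((‖T x - T y‖ + ‖S y - T x‖) / 2))

def n1 (S T : X → X) (x y : X) : ℝ :=
  max ‖S x - S y‖ (max ‖T x - S x‖ ‖S y - T y‖)

def m2 (S T : X → X) (x y : X) : ℝ :=
  max (max ‖S x - S y‖ ‖S x - T x‖)
    (max ‖S y - T y‖ ((‖S x - T y‖ + ‖S y - T x‖) / 2))

def m3 (S T : X → X) (q x y : X) : ℝ :=
  max (max ‖S x - S y‖ (Metric.infDist (S x) (segment ℝ q (T x))))
    (max (Metric.infDist (S y) (segment ℝ q (T y)))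
      ((Metric.infDist (S x) (segment ℝ q (T y)) +
        Metric.infDist (S y) (segment ℝ q (T x))) / 2))

/-- `Y^{a} = {f_a(k) : k ∈ [0,1]}` for a family `f`. -/
def Yfam (f : X → ℝ → X) (a : X) : Set X := f a '' Icc (0:ℝ) 1

def m4 (f : X → ℝ → X) (S T : X → X) (x y : X) : ℝ :=
  max (max ‖S x - S y‖ (Metric.infDist (S x) (Yfam f (T x))))
    (max (Metric.infDist (S y) (Yfam f (T y)))
      ((Metric.infDist (S x) (Yfam f (T y)) +
        Metric.infDist (S y) (Yfam f (T x))) / 2))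

/-- `ℑ = {f_α}_{α ∈ M}` is a family of functions `[0,1] → M` with `f_α(1) = α`. -/
def FamilyOn (f : X → ℝ → X) (M : Set X) : Prop :=
  (∀ a ∈ M, ∀ t ∈ Icc (0:ℝ) 1, f a t ∈ M) ∧ ∀ a ∈ M, f a 1 = a

/-- The family is contractive with contractiveness function `Φ : (0,1) → (0,1)`. -/
def ContractiveFamily (f : X → ℝ → X) (M : Set X) (Phi : ℝ → ℝ) : Prop :=
  (∀ t ∈ Ioo (0:ℝ) 1, Phi t ∈ Ioo (0:ℝ) 1) ∧
  ∀ a ∈ M, ∀ b ∈ M, ∀ t ∈ Ioo (0:ℝ) 1, ‖f a t - f b t‖ ≤ Phi t * ‖a - b‖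

/-- The family is jointly continuous: `tₙ → t₀` and `αₙ → α₀` imply
`f_{αₙ}(tₙ) → f_{α₀}(t₀)`. -/
def JointlyContinuousFamily (f : X → ℝ → X) (M : Set X) : Prop :=
  ∀ (tn : ℕ → ℝ) (t0 : ℝ), (∀ n, tn n ∈ Icc (0:ℝ) 1) → t0 ∈ Icc (0:ℝ) 1 →
    Tendsto tn atTop (𝓝 t0) →
    ∀ (an : ℕ → X) (a0 : X), (∀ n, an n ∈ M) → a0 ∈ M →
      Tendsto an atTop (𝓝 a0) →
      Tendsto (fun n => f (an n) (tn n)) atTop (𝓝 (f a0 t0))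

/-- `(S,T)` is a generalized JHℑ-suboperator pair with order `n` on `M`:
for each `k ∈ [0,1]`, `(S, T_k)` with `T_k x = f_{Tx}(k)` is a generalized
JH-operator pair with order `n`. -/
def GenJHImSubOp (f : X → ℝ → X) (S T : X → X) (M : Set X) (n : ℕ) : Prop :=
  ∀ k ∈ Icc (0:ℝ) 1, GenJHOp S (fun x => f (T x) k) M n

/-- Weak convergence of a sequence. -/
def WeakTendsTo (x : ℕ → X) (a : X) : Prop :=
  ∀ f : StrongDual ℝ X, Tendsto (fun n => f (x n)) atTop (𝓝 (f a))

/-- Weak (sequential) closure. -/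
def WSeqCl (A : Set X) : Set X := {a | ∃ x : ℕ → X, (∀ n, x n ∈ A) ∧ WeakTendsTo x a}

/-- Weak (sequential) compactness. -/
def WSeqCompact (A : Set X) : Prop :=
  ∀ x : ℕ → X, (∀ n, x n ∈ A) →
    ∃ a ∈ A, ∃ g : ℕ → ℕ, StrictMono g ∧ WeakTendsTo (x ∘ g) a

/-- `T` is completely continuous on `M`: weak convergence implies strong
convergence of images. -/
def CompletelyContinuousOn (T : X → X) (M : Set X) : Prop :=
  ∀ (x : ℕ → X) (a : X), (∀ n, x n ∈ M) → a ∈ M → WeakTendsTo x a →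
    Tendsto (fun n => T (x n)) atTop (𝓝 (T a))

/-- `S` is weakly continuous on `M`. -/
def WeaklyContinuousOn (S : X → X) (M : Set X) : Prop :=
  ∀ (x : ℕ → X) (a : X), (∀ n, x n ∈ M) → a ∈ M → WeakTendsTo x a →
    WeakTendsTo (fun n => S (x n)) (S a)

/-- `G` is demiclosed at `0` on `M`. -/
def DemiclosedAtZero (G : X → X) (M : Set X) : Prop :=
  ∀ (x : ℕ → X) (a : X), (∀ n, x n ∈ M) → a ∈ M → WeakTendsTo x a →
    Tendsto (fun n => G (x n)) atTop (𝓝 (0 : X)) → G a = 0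

/-- `T` is hemicompact on `M`. -/
def Hemicompact (T : X → X) (M : Set X) : Prop :=
  ∀ x : ℕ → X, (∀ n, x n ∈ M) →
    Tendsto (fun n => ‖x n - T (x n)‖) atTop (𝓝 (0 : ℝ)) →
    ∃ (a : X) (g : ℕ → ℕ), StrictMono g ∧ Tendsto (x ∘ g) atTop (𝓝 a)

/-- Opial's condition. -/
def OpialCondition (Y : Type*) [NormedAddCommGroup Y] [NormedSpace ℝ Y] : Prop :=
  ∀ (x : ℕ → Y) (a : Y), WeakTendsTo x a → ∀ y : Y, y ≠ a →
    liminf (fun n => ‖x n - a‖) atTop < liminf (fun n => ‖x n - y‖) atTop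

/-- `P_M(u)`, the set of best approximations to `u` out of `M`. -/
def PMset (M : Set X) (u : X) : Set X := {x ∈ M | ‖x - u‖ = Metric.infDist u M}

/-- `C_M^S(u) = {x ∈ M : Sx ∈ P_M(u)}`. -/
def CMSset (M : Set X) (S : X → X) (u : X) : Set X := {x ∈ M | S x ∈ PMset M u}

theorem intPhi_nonneg {phi : ℝ → ℝ} (hnn : ∀ t ≥ (0:ℝ), 0 ≤ phi t) {a : ℝ} (ha : 0 ≤ a) :
    0 ≤ intPhi phi a :=
  intervalIntegral.integral_nonneg ha fun t ht => hnn t ht.1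

theorem intPhi_monotoneOn {phi : ℝ → ℝ} (hnn : ∀ t ≥ (0:ℝ), 0 ≤ phi t)
    (hint : ∀ b : ℝ, IntervalIntegrable phi volume 0 b) : MonotoneOn (intPhi phi) (Ici 0) :=
  fun _ ha b _ hab =>
    intervalIntegral.integral_mono_interval le_rfl ha hab
      ((ae_restrict_iff' measurableSet_Ioc).mpr (ae_of_all _ fun t ht => hnn t ht.1.le))
      (hint b)

theorem AlteringDistance.pos {ψ : ℝ → ℝ} (hψ : AlteringDistance ψ) {t : ℝ} (ht : 0 < t) :
    0 < ψ t := by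
  obtain ⟨hmono, -, hzero⟩ := hψ
  have h0 : ψ 0 = 0 := (hzero 0 le_rfl).mpr rfl
  have hle : ψ 0 ≤ ψ t := hmono (mem_Ici.mpr le_rfl) (mem_Ici.mpr ht.le) ht.le
  exact lt_of_le_of_ne (h0 ▸ hle) fun h => ht.ne' ((hzero t ht.le).mp h.symm)

theorem CClassFun.lt_self {F : ℝ → ℝ → ℝ} (hF : CClassFun F) {s t : ℝ} (hs : 0 < s)
    (ht : 0 < t) : F s t < s := by
  obtain ⟨-, hle, heq⟩ := hF
  refine lt_of_le_of_ne (hle s hs.le t ht.le) fun h => ?_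
  rcases heq s hs.le t ht.le h with h | h
  exacts [hs.ne' h, ht.ne' h]

theorem cClass_bound_lt_psi_intPhi {phi ψ φu : ℝ → ℝ} {F : ℝ → ℝ → ℝ} {γ : ℝ → ℝ}
    (hphi : PhiAdmissible phi) (hψ : AlteringDistance ψ) (hφu : UltraAltering φu)
    (hF : CClassFun F) (hγ : GammaAdmissible γ) {r : ℝ} (hr : 0 < r) :
    F (ψ (intPhi phi (γ r))) (φu (intPhi phi (γ r))) < ψ (intPhi phi r) := by
  obtain ⟨hnn, hint, hpos⟩ := hphi
  obtain ⟨hγpos, -, hγlt⟩ := hγ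
  have hγr : 0 < γ r := hγpos r hr
  have hΦγ : 0 < intPhi phi (γ r) := hpos _ hγr
  have hΦle : intPhi phi (γ r) ≤ intPhi phi r :=
    intPhi_monotoneOn hnn hint (mem_Ici.mpr hγr.le) (mem_Ici.mpr hr.le) (hγlt r hr).le
  calc F (ψ (intPhi phi (γ r))) (φu (intPhi phi (γ r)))
      < ψ (intPhi phi (γ r)) := hF.lt_self (hψ.pos hΦγ) (hφu.2.2.1 _ hΦγ)
    _ ≤ ψ (intPhi phi r) :=
      hψ.1 (mem_Ici.mpr hΦγ.le) (mem_Ici.mpr (intPhi_nonneg hnn hr.le)) hΦle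

omit [NormedSpace ℝ X] in
theorem m2_eq_of_coincidence {S T : X → X} {x y : X} (hx : S x = T x) (hy : S y = T y) :
    m2 S T x y = ‖T x - T y‖ := by
  simp only [m2, hx, hy, sub_self, norm_zero, norm_sub_rev (T y) (T x), add_self_div_two,
    max_eq_left (norm_nonneg (T x - T y)),
    max_eq_right (norm_nonneg (T x - T y)), max_self]

omit [NormedSpace ℝ X] in
theorem PCset_subsingleton_of_le {S T : X → X} {M : Set X} {f G : ℝ → ℝ}
    (hcontr : ∀ x ∈ M, ∀ y ∈ M, f ‖T x - T y‖ ≤ G (m2 S T x y))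
    (hG : ∀ r > 0, G r < f r) : (PCset S T M).Subsingleton := by
  rintro _ ⟨x, hx, hSx, rfl⟩ _ ⟨y, hy, hSy, rfl⟩
  by_contra hne
  have hd : 0 < ‖T x - T y‖ := norm_pos_iff.mpr (sub_ne_zero.mpr hne)
  have h := hcontr x hx y hy
  rw [m2_eq_of_coincidence hSx hSy] at h
  exact (hG _ hd).not_ge h

omit [NormedSpace ℝ X] in
theorem GenJHOp.exists_common_fixedPoint {S T : X → X} {M : Set X} {n : ℕ}
    (hJH : GenJHOp S T M n) (hn : 1 ≤ n) (hPC : (PCset S T M).Subsingleton) :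
    ∃ x ∈ M, S x = x ∧ T x = x := by
  obtain ⟨x, hx, hST, hbd⟩ := hJH
  rw [Metric.diam_subsingleton hPC, zero_pow (by omega)] at hbd
  have hSx : S x = x := sub_eq_zero.mp (norm_le_zero_iff.mp hbd)
  exact ⟨x, hx, hSx, hST ▸ hSx⟩

theorem stmt_1_general {X : Type*} [NormedAddCommGroup X] [NormedSpace ℝ X]
    (M : Set X) (S T : X → X)
    (phi ψ φu : ℝ → ℝ) (F : ℝ → ℝ → ℝ)
    (hphi : PhiAdmissible phi) (hψ : AlteringDistance ψ) (hφu : UltraAltering φu)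
    (hF : CClassFun F)
    (γ : ℝ → ℝ) (hγ : GammaAdmissible γ)
    (n₀ : ℕ) (hn₀ : 1 ≤ n₀) (hJH : GenJHOp S T M n₀)
    (hcontr : ∀ x ∈ M, ∀ y ∈ M,
      ψ (intPhi phi ‖T x - T y‖) ≤
        F (ψ (intPhi phi (γ (m2 S T x y)))) (φu (intPhi phi (γ (m2 S T x y))))) :
    ∃ x ∈ M, S x = x ∧ T x = x :=
  hJH.exists_common_fixedPoint hn₀ <|
    PCset_subsingleton_of_le hcontr fun _ hr => cClass_bound_lt_psi_intPhi hphi hψ hφu hF hγ hr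

theorem stmt_1 {X : Type*} [NormedAddCommGroup X] [NormedSpace ℝ X]
    (M : Set X) (hMne : M.Nonempty) (S T : X → X)
    (hS : MapsTo S M M) (hT : MapsTo T M M)
    (phi ψ φu : ℝ → ℝ) (F : ℝ → ℝ → ℝ)
    (hphi : PhiAdmissible phi) (hψ : AlteringDistance ψ) (hφu : UltraAltering φu)
    (hF : CClassFun F) (hmono : MonotoneTriple ψ φu F)
    (γ : ℝ → ℝ) (hγ : GammaAdmissible γ)
    (n₀ : ℕ) (hn₀ : 1 ≤ n₀) (hJH : GenJHOp S T M n₀)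
    (hcontr : ∀ x ∈ M, ∀ y ∈ M,
      ψ (intPhi phi ‖T x - T y‖) ≤
        F (ψ (intPhi phi (γ (m2 S T x y)))) (φu (intPhi phi (γ (m2 S T x y))))) :
    ∃ x ∈ M, S x = x ∧ T x = x :=
  stmt_1_general M S T phi ψ φu F hphi hψ hφu hF γ hγ n₀ hn₀ hJH hcontr

end
end

section
/- Let M be a q-starshaped subset of a real normed space X and S, T : M → M self-mappings with q ∈ Fix(S). Suppose (i) (S,T) is a generalized JH-suboperator pair with order n₀ for some n₀ ∈ ℕ, and (ii) for each x, y ∈ M and each k ∈ (0,1), ψ(∫₀^{‖Tx−Ty‖} φ(t)dt) ≤ F(ψ(∫₀^{(1/k)γ(m₃(x,y))} φ(t)dt), φᵤ(∫₀^{(1/k)γ(m₃(x,y))} φ(t)dt)), where ψ is an altering distance function, φᵤ is an ultra altering distance function, F is a C-class function, and the triple (ψ, φᵤ, F) is monotone. If M is bounded and complete, T is hemicompact, and S is continuous, then Fix(S) ∩ Fix(T) ≠ ∅. -/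
/-!
For `k ∈ (0,1)` the contractive condition forces the points of coincidence of `S` and
`T_k = (1 - k) q + k T` to collapse to a single point, so the JH-condition turns the coincidence
point into a common fixed point `x_k` of `S` and `T_k`. As `k → 1` these are approximate fixed
points of `T`, and hemicompactness yields a limit `a` with `S a = a`. Finally `T a = a`: otherwise
`m₃(x_k, a)` is at most `‖x_k - a‖ + ‖a - T a‖`, and passing to the limit in the contractive
condition gives `ψ(∫₀^d φ) ≤ F(ψ(∫₀^d φ), φᵤ(∫₀^d φ))` for `d = ‖a - T a‖ > 0`, which a
C-class function forbids.
-/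

open MeasureTheory Filter Topology Set

noncomputable section

variable {X : Type*} [NormedAddCommGroup X] [NormedSpace ℝ X]

open Metric

lemma ContinuousOn.tendsto_comp {α β γ : Type*} [TopologicalSpace β] [TopologicalSpace γ]
    {f : β → γ} {s : Set β} {a : β} {u : α → β} {l : Filter α} (hf : ContinuousOn f s)
    (ha : a ∈ s) (hu : Tendsto u l (𝓝 a)) (hus : ∀ᶠ n in l, u n ∈ s) :
    Tendsto (fun n => f (u n)) l (𝓝 (f a)) :=
  (hf a ha).tendsto.comp (tendsto_nhdsWithin_iff.2 ⟨hu, hus⟩)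

section ControlFunctions

variable {phi ψ φu f g : ℝ → ℝ} {F : ℝ → ℝ → ℝ} {t : ℝ}

lemma PhiAdmissible.intPhi_nonneg (hphi : PhiAdmissible phi) (ht : 0 ≤ t) :
    0 ≤ intPhi phi t :=
  intervalIntegral.integral_nonneg ht fun u hu => hphi.1 u hu.1

lemma PhiAdmissible.continuousOn_comp (hphi : PhiAdmissible phi) (hf : ContinuousOn f (Ici 0)) :
    ContinuousOn (fun t => f (intPhi phi t)) (Ici 0) :=
  hf.comp (intervalIntegral.continuous_primitive
    (fun a b => (hphi.2.1 a).symm.trans (hphi.2.1 b)) 0).continuousOn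
    fun _ ht => hphi.intPhi_nonneg ht

lemma AlteringDistance.nonneg (hψ : AlteringDistance ψ) (ht : 0 ≤ t) : 0 ≤ ψ t :=
  ((hψ.2.2 0 le_rfl).2 rfl).symm.trans_le (hψ.1 self_mem_Ici ht ht)

lemma UltraAltering.nonneg (hφu : UltraAltering φu) (ht : 0 ≤ t) : 0 ≤ φu t :=
  hφu.2.2.2.trans (hφu.2.1 self_mem_Ici ht ht)

lemma CClassFun.continuousOn_comp (hF : CClassFun F) (hf : ContinuousOn f (Ici 0))
    (hg : ContinuousOn g (Ici 0)) (hf0 : MapsTo f (Ici 0) (Ici 0))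
    (hg0 : MapsTo g (Ici 0) (Ici 0)) : ContinuousOn (fun t => F (f t) (g t)) (Ici 0) :=
  hF.1.comp (hf.prodMk hg) fun _ ht => ⟨hf0 ht, hg0 ht⟩

lemma CClassFun.lt_of_pos (hF : CClassFun F) (hphi : PhiAdmissible phi)
    (hψ : AlteringDistance ψ) (hφu : UltraAltering φu) (ht : 0 < t) :
    F (ψ (intPhi phi t)) (φu (intPhi phi t)) < ψ (intPhi phi t) := by
  have hI : 0 < intPhi phi t := hphi.2.2 t ht
  have hψI : ψ (intPhi phi t) ≠ 0 := fun h => hI.ne' ((hψ.2.2 _ hI.le).1 h)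
  have hφI : φu (intPhi phi t) ≠ 0 := (hφu.2.2.1 _ hI).ne'
  refine (hF.2.1 _ (hψ.nonneg hI.le) _ (hφu.nonneg hI.le)).lt_of_ne fun h => ?_
  rcases hF.2.2 _ (hψ.nonneg hI.le) _ (hφu.nonneg hI.le) h with h | h
  exacts [hψI h, hφI h]

/-- Since `γ m < m`, the parameter `k = γ m / E` lies in `(0,1)` and `(1 / k) γ m = E`. -/
lemma GammaAdmissible.of_forall_Ioo {γ : ℝ → ℝ} (hγ : GammaAdmissible γ) {P : ℝ → Prop}
    {m E : ℝ} (h : ∀ k ∈ Ioo (0:ℝ) 1, P (1 / k * γ m)) (hm : 0 < m) (hmE : m ≤ E) : P E := by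
  have hγm : 0 < γ m := hγ.1 m hm
  have hE : 0 < E := hm.trans_le hmE
  have hk : γ m / E ∈ Ioo (0:ℝ) 1 :=
    ⟨by positivity, (div_lt_one hE).2 ((hγ.2.2 m hm).trans_le hmE)⟩
  have hkE : 1 / (γ m / E) * γ m = E := by field_simp
  simpa only [hkE] using h _ hk

end ControlFunctions

section M3

variable {S T : X → X} {q x y : X}

lemma norm_sub_le_m3 : ‖S x - S y‖ ≤ m3 S T q x y :=
  (le_max_left _ _).trans (le_max_left _ _)

lemma m3_le_of_mem_segment (hx : S x ∈ segment ℝ q (T x)) :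
    m3 S T q x y ≤ ‖S x - S y‖ + ‖S y - T y‖ := by
  have hxx : infDist (S x) (segment ℝ q (T x)) = 0 := infDist_zero_of_mem hx
  have hyy : infDist (S y) (segment ℝ q (T y)) ≤ ‖S y - T y‖ := by
    simpa [dist_eq_norm] using infDist_le_dist_of_mem (x := S y) (right_mem_segment ℝ q (T y))
  have hxy : infDist (S x) (segment ℝ q (T y)) ≤ ‖S x - S y‖ + ‖S y - T y‖ := by
    have := infDist_le_infDist_add_dist (x := S x) (y := S y) (s := segment ℝ q (T y))
    rw [dist_eq_norm] at this
    linarith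
  have hyx : infDist (S y) (segment ℝ q (T x)) ≤ ‖S x - S y‖ := by
    simpa [dist_eq_norm, norm_sub_rev] using infDist_le_dist_of_mem (x := S y) hx
  unfold m3
  refine max_le (max_le ?_ ?_) (max_le ?_ ?_) <;>
    linarith [norm_nonneg (S x - S y), norm_nonneg (S y - T y)]

lemma m3_le_of_mem_segment_of_mem_segment (hx : S x ∈ segment ℝ q (T x))
    (hy : S y ∈ segment ℝ q (T y)) : m3 S T q x y ≤ ‖S x - S y‖ := by
  have hxy : infDist (S x) (segment ℝ q (T y)) ≤ ‖S x - S y‖ := by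
    simpa [dist_eq_norm] using infDist_le_dist_of_mem (x := S x) hy
  have hyx : infDist (S y) (segment ℝ q (T x)) ≤ ‖S x - S y‖ := by
    simpa [dist_eq_norm, norm_sub_rev] using infDist_le_dist_of_mem (x := S y) hx
  unfold m3
  rw [infDist_zero_of_mem hx, infDist_zero_of_mem hy]
  refine max_le (max_le le_rfl (norm_nonneg _)) (max_le (norm_nonneg _) ?_)
  linarith

end M3

def IsM3Contraction (S T : X → X) (q : X) (M : Set X) (L G : ℝ → ℝ) : Prop :=
  ∀ x ∈ M, ∀ y ∈ M, ∀ E, 0 < m3 S T q x y → m3 S T q x y ≤ E → L ‖T x - T y‖ ≤ G E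

lemma GenJHOp.exists_fixed_of_subsingleton {Y : Type*} [NormedAddCommGroup Y] {M : Set Y}
    {S T : Y → Y} {n : ℕ} (h : GenJHOp S T M n) (hn : n ≠ 0) (hPC : (PCset S T M).Subsingleton) :
    ∃ x ∈ M, S x = x ∧ T x = x := by
  obtain ⟨x, hx, hST, hle⟩ := h
  rw [diam_subsingleton hPC, zero_pow hn, norm_le_zero_iff, sub_eq_zero] at hle
  exact ⟨x, hx, hle, hST.symm.trans hle⟩

lemma norm_sub_eq_of_homotopy_eq {T : X → X} {q x : X} {k : ℝ} (hk : k ∈ Ioo (0:ℝ) 1)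
    (h : (1 - k) • q + k • T x = x) : ‖x - T x‖ = (1 - k) / k * ‖q - x‖ := by
  have hsmul : k • (x - T x) = (1 - k) • (q - x) := by
    linear_combination (norm := module) -h
  have hnorm := congrArg norm hsmul
  rw [norm_smul, norm_smul, Real.norm_of_nonneg hk.1.le,
    Real.norm_of_nonneg (sub_nonneg.2 hk.2.le)] at hnorm
  rw [div_mul_eq_mul_div, eq_div_iff hk.1.ne', mul_comm, hnorm]

section Coincidence

variable {M : Set X} {S T : X → X} {q : X} {L G : ℝ → ℝ}

lemma IsM3Contraction.subsingleton_PCset (h : IsM3Contraction S T q M L G)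
    (hGL : ∀ t > 0, G t < L t) {k : ℝ} (hk : k ∈ Ioo (0:ℝ) 1) :
    (PCset S (fun x => (1 - k) • q + k • T x) M).Subsingleton := by
  rintro _ ⟨x, hx, rfl, hTx⟩ _ ⟨y, hy, rfl, hTy⟩
  by_contra hne
  have hseg : ∀ z, (1 - k) • q + k • T z = S z → S z ∈ segment ℝ q (T z) :=
    fun z hz => ⟨1 - k, k, by linarith [hk.2], hk.1.le, by ring, hz⟩
  have hpos : 0 < ‖S x - S y‖ := norm_pos_iff.2 (sub_ne_zero.2 hne)
  have hle : ‖S x - S y‖ ≤ ‖T x - T y‖ := by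
    rw [← hTx, ← hTy, show (1 - k) • q + k • T x - ((1 - k) • q + k • T y) = k • (T x - T y)
      by module, norm_smul, Real.norm_of_nonneg hk.1.le]
    exact mul_le_of_le_one_left (norm_nonneg _) hk.2.le
  have hm3 := m3_le_of_mem_segment_of_mem_segment (hseg x hTx) (hseg y hTy)
  exact (hGL _ (hpos.trans_le hle)).not_ge
    (h x hx y hy _ (hpos.trans_le norm_sub_le_m3) (hm3.trans hle))

lemma IsM3Contraction.apply_eq_of_tendsto (h : IsM3Contraction S T q M L G)
    (hGL : ∀ t > 0, G t < L t) (hL : ContinuousOn L (Ici 0)) (hG : ContinuousOn G (Ici 0))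
    {y : ℕ → X} {a : X} (hyM : ∀ m, y m ∈ M) (hSy : ∀ m, S (y m) = y m)
    (hseg : ∀ m, y m ∈ segment ℝ q (T (y m))) (hy : Tendsto y atTop (𝓝 a))
    (hyTy : Tendsto (fun m => ‖y m - T (y m)‖) atTop (𝓝 0)) (ha : a ∈ M) (hSa : S a = a) :
    T a = a := by
  by_contra hne
  have hd : 0 < ‖a - T a‖ := norm_pos_iff.2 (sub_ne_zero.2 (Ne.symm hne))
  have hTy : Tendsto (fun m => T (y m)) atTop (𝓝 a) := by
    simpa using hy.sub (tendsto_zero_iff_norm_tendsto_zero.2 hyTy)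
  have hev : ∀ᶠ m in atTop, y m ≠ a := by
    filter_upwards [hyTy.eventually (gt_mem_nhds hd)] with m hm hya
    rw [hya] at hm
    exact hm.false
  have hbound : ∀ᶠ m in atTop, L ‖T (y m) - T a‖ ≤ G (‖y m - a‖ + ‖a - T a‖) := by
    filter_upwards [hev] with m hm
    have hm3 := m3_le_of_mem_segment (S := S) (T := T) (q := q) (x := y m) (y := a)
      (by rw [hSy m]; exact hseg m)
    rw [hSy m, hSa] at hm3
    refine h _ (hyM m) _ ha _ ((norm_pos_iff.2 (sub_ne_zero.2 hm)).trans_le ?_) hm3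
    simpa [hSy m, hSa] using norm_sub_le_m3 (S := S) (T := T) (q := q) (x := y m) (y := a)
  have hlim : L ‖a - T a‖ ≤ G ‖a - T a‖ := by
    refine le_of_tendsto_of_tendsto ?_ ?_ hbound
    · refine hL.tendsto_comp hd.le ?_ (Eventually.of_forall fun _ => norm_nonneg _)
      simpa [norm_sub_rev] using (hTy.sub_const (T a)).norm
    · refine hG.tendsto_comp hd.le ?_ (Eventually.of_forall fun _ => mem_Ici.2 (by positivity))
      simpa using (hy.sub_const a).norm.add_const ‖a - T a‖
  exact (hGL _ hd).not_ge hlim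

lemma IsM3Contraction.exists_approx_fixedPoints (h : IsM3Contraction S T q M L G)
    (hGL : ∀ t > 0, G t < L t) {n : ℕ} (hJH : GenJHSubOp S T M q n) (hn : n ≠ 0)
    (hM : Bornology.IsBounded M) :
    ∃ x : ℕ → X, (∀ i, x i ∈ M) ∧ (∀ i, S (x i) = x i) ∧
      (∀ i, x i ∈ segment ℝ q (T (x i))) ∧ Tendsto (fun i => ‖x i - T (x i)‖) atTop (𝓝 0) := by
  have hk : ∀ i : ℕ, ((i : ℝ) + 1) / (i + 2) ∈ Ioo (0:ℝ) 1 :=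
    fun i => ⟨by positivity, (div_lt_one (by positivity)).2 (by linarith)⟩
  choose x hxM hSx hTx using fun i =>
    (hJH _ (Ioo_subset_Icc_self (hk i))).exists_fixed_of_subsingleton hn
      (h.subsingleton_PCset hGL (hk i))
  obtain ⟨C, hC⟩ := hM.exists_norm_le
  refine ⟨x, hxM, hSx, fun i => ⟨_, _, by linarith [(hk i).2], (hk i).1.le, by ring, hTx i⟩, ?_⟩
  have hbound : ∀ i : ℕ, ‖x i - T (x i)‖ ≤ (‖q‖ + C) * (1 / ((i : ℝ) + 1)) := by
    intro i
    have hratio :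
        (1 - ((i : ℝ) + 1) / (i + 2)) / (((i : ℝ) + 1) / (i + 2)) = 1 / ((i : ℝ) + 1) := by
      field_simp
      ring
    rw [norm_sub_eq_of_homotopy_eq (hk i) (hTx i), hratio, mul_comm]
    gcongr
    exact (norm_sub_le _ _).trans (add_le_add_right (hC _ (hxM i)) _)
  exact squeeze_zero (fun _ => norm_nonneg _) hbound
    (by simpa using tendsto_one_div_add_atTop_nhds_zero_nat.const_mul (‖q‖ + C))

end Coincidence

theorem stmt_5_general {X : Type*} [NormedAddCommGroup X] [NormedSpace ℝ X]
    (M : Set X) (q : X) (S T : X → X)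
    (phi ψ φu : ℝ → ℝ) (F : ℝ → ℝ → ℝ)
    (hphi : PhiAdmissible phi) (hψ : AlteringDistance ψ) (hφu : UltraAltering φu)
    (hF : CClassFun F)
    (γ : ℝ → ℝ) (hγ : GammaAdmissible γ)
    (n₀ : ℕ) (hn₀ : 1 ≤ n₀) (hJH : GenJHSubOp S T M q n₀)
    (hcontr : ∀ x ∈ M, ∀ y ∈ M, ∀ k ∈ Ioo (0:ℝ) 1,
      ψ (intPhi phi ‖T x - T y‖) ≤
        F (ψ (intPhi phi ((1 / k) * γ (m3 S T q x y))))
          (φu (intPhi phi ((1 / k) * γ (m3 S T q x y)))))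
    (hMb : Bornology.IsBounded M) (hMc : IsComplete M)
    (hTh : Hemicompact T M) (hScont : ContinuousOn S M) :
    ∃ x ∈ M, S x = x ∧ T x = x := by
  set L : ℝ → ℝ := fun t => ψ (intPhi phi t)
  set G : ℝ → ℝ := fun t => F (ψ (intPhi phi t)) (φu (intPhi phi t))
  have hLG : IsM3Contraction S T q M L G :=
    fun x hx y hy _ hm hmE =>
      hγ.of_forall_Ioo (P := fun t => L ‖T x - T y‖ ≤ G t) (hcontr x hx y hy) hm hmE
  have hGL : ∀ t > 0, G t < L t := fun _ ht => hF.lt_of_pos hphi hψ hφu ht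
  have hL : ContinuousOn L (Ici 0) := hphi.continuousOn_comp hψ.2.1
  have hG : ContinuousOn G (Ici 0) :=
    hF.continuousOn_comp hL (hphi.continuousOn_comp hφu.1)
      (fun _ ht => hψ.nonneg (hphi.intPhi_nonneg ht))
      (fun _ ht => hφu.nonneg (hphi.intPhi_nonneg ht))
  obtain ⟨x, hxM, hSx, hseg, hxT⟩ := hLG.exists_approx_fixedPoints hGL hJH (by omega) hMb
  obtain ⟨a, g, hg, hxa⟩ := hTh x hxM hxT
  have hxgM : ∀ m, x (g m) ∈ M := fun m => hxM (g m)
  have haM : a ∈ M := hMc.isClosed.mem_of_tendsto hxa (Eventually.of_forall hxgM)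
  have hSa : S a = a := tendsto_nhds_unique
    ((hScont.tendsto_comp haM hxa (Eventually.of_forall hxgM)).congr fun m => hSx (g m)) hxa
  exact ⟨a, haM, hSa, hLG.apply_eq_of_tendsto hGL hL hG hxgM (fun m => hSx (g m))
    (fun m => hseg (g m)) hxa (hxT.comp hg.tendsto_atTop) haM hSa⟩

theorem stmt_5 {X : Type*} [NormedAddCommGroup X] [NormedSpace ℝ X]
    (M : Set X) (q : X) (hstar : Starshaped M q) (S T : X → X)
    (hS : MapsTo S M M) (hT : MapsTo T M M) (hq : S q = q)
    (phi ψ φu : ℝ → ℝ) (F : ℝ → ℝ → ℝ)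
    (hphi : PhiAdmissible phi) (hψ : AlteringDistance ψ) (hφu : UltraAltering φu)
    (hF : CClassFun F) (hmono : MonotoneTriple ψ φu F)
    (γ : ℝ → ℝ) (hγ : GammaAdmissible γ)
    (n₀ : ℕ) (hn₀ : 1 ≤ n₀) (hJH : GenJHSubOp S T M q n₀)
    (hcontr : ∀ x ∈ M, ∀ y ∈ M, ∀ k ∈ Ioo (0:ℝ) 1,
      ψ (intPhi phi ‖T x - T y‖) ≤
        F (ψ (intPhi phi ((1 / k) * γ (m3 S T q x y))))
          (φu (intPhi phi ((1 / k) * γ (m3 S T q x y)))))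
    (hMb : Bornology.IsBounded M) (hMc : IsComplete M)
    (hTh : Hemicompact T M) (hScont : ContinuousOn S M) :
    ∃ x ∈ M, S x = x ∧ T x = x :=
  stmt_5_general M q S T phi ψ φu F hphi hψ hφu hF γ hγ n₀ hn₀ hJH hcontr hMb hMc hTh hScont

end
end

section
/- Let M be a q-starshaped subset of a real normed space X and T : M → M a generalized γ-contraction mapping of integral type, i.e., for each x, y ∈ M and each k ∈ (0,1), ∫₀^{‖Tx−Ty‖} φ(t)dt ≤ ∫₀^{(1/k)γ(‖x−y‖)} φ(t)dt, where γ is continuous, nondecreasing, and satisfies γ(t) < t for t > 0. If M is bounded and complete and T is hemicompact, then Fix(T) ≠ ∅. -/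
open MeasureTheory Filter Topology Set

noncomputable section

variable {X : Type*} [NormedAddCommGroup X] [NormedSpace ℝ X]

/-!
Write `F a = ∫₀^a φ`. Letting `k = γ ‖x - y‖ / σ` in the contraction condition shows that `T`
maps pairs at distance `≤ σ` to pairs at distance `≤ σ` whenever `F` increases strictly to the
right of `σ`, and such scales `σ` exist in every interval `(0, ε]`. In particular `T` is
continuous on `M`. For a fixed such `σ`, the maps `T_k = (1 - k) q + k T` are contractions with
ratio `k` at scale `σ`, so a `σ`-approximate fixed point of `T_k` is carried by `T_k` to one of
`T_{k'}` when `k'` is close to `k`. Starting from `q` and `k = 0`, finitely many such steps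
reach `k = 1 - σ / diam M`, which gives a `2σ`-approximate fixed point of `T`. Hemicompactness
turns a sequence of approximate fixed points into a convergent one, whose limit is fixed.
-/

section

variable {E : Type*} [NormedAddCommGroup E] {M : Set E} {q : E} {T : E → E}

lemma continuous_intPhi {phi : ℝ → ℝ} (hphi : ∀ b : ℝ, IntervalIntegrable phi volume 0 b) :
    Continuous (intPhi phi) :=
  intervalIntegral.continuous_primitive (fun a b => (hphi a).symm.trans (hphi b)) 0

lemma monotoneOn_intPhi {phi : ℝ → ℝ} (hphi0 : ∀ t ≥ (0:ℝ), 0 ≤ phi t)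
    (hphi : ∀ b : ℝ, IntervalIntegrable phi volume 0 b) : MonotoneOn (intPhi phi) (Ici 0) :=
  fun _ ha b _ hab => intervalIntegral.integral_mono_interval le_rfl ha hab
    ((ae_restrict_mem measurableSet_Ioc).mono fun t ht => hphi0 t ht.1.le) (hphi b)

lemma MonotoneOn.exists_mem_Ioc_forall_lt {F : ℝ → ℝ} (hF : MonotoneOn F (Ici 0))
    (hFc : Continuous F) {ε : ℝ} (hε : 0 < ε) (hFε : F 0 < F ε) :
    ∃ σ ∈ Ioc 0 ε, ∀ t, σ < t → F σ < F t := by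
  obtain ⟨c, hc0, hcε⟩ := exists_between hFε
  set S := Icc 0 ε ∩ F ⁻¹' Iic c
  have hSbdd : BddAbove S := ⟨ε, fun t ht => ht.1.2⟩
  obtain ⟨t₀, ht₀, hFt₀⟩ : ∃ t₀ ∈ Ioo 0 ε, F t₀ = c :=
    intermediate_value_Ioo hε.le hFc.continuousOn ⟨hc0, hcε⟩
  have ht₀S : t₀ ∈ S := ⟨⟨ht₀.1.le, ht₀.2.le⟩, hFt₀.le⟩
  have hσS : sSup S ∈ S :=
    (isClosed_Icc.inter (isClosed_Iic.preimage hFc)).csSup_mem ⟨t₀, ht₀S⟩ hSbdd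
  have hσ0 : 0 < sSup S := ht₀.1.trans_le (le_csSup hSbdd ht₀S)
  have hσε : sSup S < ε :=
    hσS.1.2.lt_of_ne fun h => (hσS.2.trans_lt hcε).ne (by rw [h])
  refine ⟨sSup S, ⟨hσ0, hσS.1.2⟩, fun t ht => ?_⟩
  have ht' : sSup S < min t ε := lt_min ht hσε
  have hct' : c < F (min t ε) := by
    by_contra! h
    exact (le_csSup hSbdd ⟨⟨hσ0.le.trans ht'.le, min_le_right _ _⟩, h⟩).not_gt ht'
  calc F (sSup S) ≤ c := hσS.2
    _ < F (min t ε) := hct'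
    _ ≤ F t := hF (hσ0.le.trans ht'.le) (hσ0.le.trans (ht'.le.trans (min_le_left _ _)))
        (min_le_left _ _)

def PreservesDistLE (T : E → E) (M : Set E) (σ : ℝ) : Prop :=
  ∀ x ∈ M, ∀ y ∈ M, ‖x - y‖ ≤ σ → ‖T x - T y‖ ≤ σ

lemma preservesDistLE_of_integral_contraction {F γ : ℝ → ℝ}
    (hγ : GammaAdmissible γ)
    (hcontr : ∀ x ∈ M, ∀ y ∈ M, ∀ k ∈ Ioo (0:ℝ) 1, F ‖T x - T y‖ ≤ F ((1 / k) * γ ‖x - y‖))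
    {σ : ℝ} (hσ : 0 < σ) (hFσ : ∀ t, σ < t → F σ < F t) : PreservesDistLE T M σ := by
  intro x hx y hy hxy
  rcases eq_or_ne x y with rfl | hne
  · simpa using hσ.le
  have hd : 0 < ‖x - y‖ := norm_sub_pos_iff.mpr hne
  have hγd : 0 < γ ‖x - y‖ := hγ.1 _ hd
  have hk : γ ‖x - y‖ / σ ∈ Ioo (0:ℝ) 1 :=
    ⟨div_pos hγd hσ, (div_lt_one hσ).mpr ((hγ.2.2 _ hd).trans_le hxy)⟩
  have h := hcontr x hx y hy _ hk
  rw [one_div_div, div_mul_cancel₀ _ hγd.ne'] at h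
  by_contra! hgt
  exact (hFσ _ hgt).not_ge h

lemma continuousOn_of_preservesDistLE
    (hT : ∀ ε > 0, ∃ σ ∈ Ioc 0 ε, PreservesDistLE T M σ) : ContinuousOn T M := by
  refine Metric.continuousOn_iff.mpr fun b hb ε hε => ?_
  obtain ⟨σ, ⟨hσ0, hσε⟩, hσ⟩ := hT (ε / 2) (half_pos hε)
  refine ⟨σ, hσ0, fun a ha hab => ?_⟩
  rw [dist_eq_norm] at hab ⊢
  linarith [hσ a ha b hb hab.le]

lemma Hemicompact.exists_fixedPoint (hTh : Hemicompact T M) (hM : IsClosed M)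
    (hTc : ContinuousOn T M) (happrox : ∀ ε > 0, ∃ x ∈ M, ‖x - T x‖ ≤ ε) :
    ∃ x ∈ M, T x = x := by
  choose x hxM hx using fun n : ℕ => happrox (1 / (n + 1)) Nat.one_div_pos_of_nat
  have hx0 : Tendsto (fun n => ‖x n - T (x n)‖) atTop (𝓝 0) :=
    squeeze_zero (fun _ => norm_nonneg _) hx tendsto_one_div_add_atTop_nhds_zero_nat
  obtain ⟨a, g, hg, hxa⟩ := hTh x hxM hx0
  have haM : a ∈ M := hM.mem_of_tendsto hxa (Eventually.of_forall fun n => hxM (g n))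
  have hTxa : Tendsto (T ∘ x ∘ g) atTop (𝓝 (T a)) :=
    (hTc a haM).tendsto.comp (tendsto_nhdsWithin_iff.mpr ⟨hxa, .of_forall fun n => hxM (g n)⟩)
  have hlim : Tendsto (fun n => x (g n) - T (x (g n))) atTop (𝓝 (a - T a)) := hxa.sub hTxa
  have hlim0 : Tendsto (fun n => x (g n) - T (x (g n))) atTop (𝓝 0) :=
    tendsto_zero_iff_norm_tendsto_zero.mpr (hx0.comp hg.tendsto_atTop)
  exact ⟨a, haM, (sub_eq_zero.mp (tendsto_nhds_unique hlim hlim0)).symm⟩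

variable [NormedSpace ℝ E]

def shrinkMap (q : E) (T : E → E) (k : ℝ) (x : E) : E := (1 - k) • q + k • T x

lemma shrinkMap_mem (hstar : Starshaped M q) (hT : MapsTo T M M) {k : ℝ} (hk : k ∈ Icc 0 1)
    {x : E} (hx : x ∈ M) : shrinkMap q T k x ∈ M :=
  hstar.2 _ (hT hx) ⟨1 - k, k, by linarith [hk.2], hk.1, by ring, rfl⟩

lemma norm_sub_shrinkMap_le {σ D k k' : ℝ} (hσ : PreservesDistLE T M σ) (hT : MapsTo T M M)
    (hD : ∀ u ∈ M, ∀ v ∈ M, ‖u - v‖ ≤ D) (hq : q ∈ M) (hk : 0 ≤ k)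
    (hkk' : k * σ + |k' - k| * D ≤ σ) {x : E} (hx : x ∈ M) (hy : shrinkMap q T k x ∈ M)
    (hxσ : ‖x - shrinkMap q T k x‖ ≤ σ) :
    ‖shrinkMap q T k x - shrinkMap q T k' (shrinkMap q T k x)‖ ≤ σ := by
  set y := shrinkMap q T k x
  have hsplit : y - shrinkMap q T k' y = k • (T x - T y) + (k - k') • (T y - q) := by
    simp only [y, shrinkMap]; module
  calc ‖y - shrinkMap q T k' y‖ ≤ ‖k • (T x - T y)‖ + ‖(k - k') • (T y - q)‖ :=
        hsplit ▸ norm_add_le _ _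
    _ = k * ‖T x - T y‖ + |k' - k| * ‖T y - q‖ := by
        rw [norm_smul, norm_smul, Real.norm_of_nonneg hk, Real.norm_eq_abs, abs_sub_comm]
    _ ≤ k * σ + |k' - k| * D := by
        gcongr
        · exact hσ x hx y hy hxσ
        · exact hD _ (hT hy) q hq
    _ ≤ σ := hkk'

-- The parameter rises from `0` to `1 - σ / D` in steps of `(σ / D) ^ 2`, the largest step
-- for which `norm_sub_shrinkMap_le` applies up to `k = 1 - σ / D`.
lemma exists_norm_sub_shrinkMap_le (hstar : Starshaped M q) (hT : MapsTo T M M)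
    {σ D : ℝ} (hσ : PreservesDistLE T M σ) (hσ0 : 0 < σ) (hσD : σ ≤ D)
    (hD : ∀ u ∈ M, ∀ v ∈ M, ‖u - v‖ ≤ D) (n : ℕ) :
    ∃ x ∈ M, ‖x - shrinkMap q T (min (1 - σ / D) (n * (σ / D) ^ 2)) x‖ ≤ σ := by
  have hD0 : 0 < D := hσ0.trans_le hσD
  have hK0 : 0 ≤ 1 - σ / D := sub_nonneg.mpr ((div_le_one hD0).mpr hσD)
  induction n with
  | zero => exact ⟨q, hstar.1, by simpa [shrinkMap, min_eq_right hK0] using hσ0.le⟩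
  | succ n ih =>
    obtain ⟨x, hx, hxσ⟩ := ih
    set k := min (1 - σ / D) (n * (σ / D) ^ 2)
    set k' := min (1 - σ / D) ((n + 1 : ℕ) * (σ / D) ^ 2)
    have hk : k ∈ Icc 0 1 :=
      ⟨le_min hK0 (by positivity), (min_le_left _ _).trans (by linarith [div_pos hσ0 hD0])⟩
    have hkk' : k ≤ k' := min_le_min_left _ (by gcongr; simp)
    have hk'k : k' ≤ k + (σ / D) ^ 2 := by
      rw [← min_add_add_right]
      exact min_le_min (by linarith [sq_nonneg (σ / D)]) (by push_cast; linarith)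
    have hstep : k * σ + |k' - k| * D ≤ σ := by
      rw [abs_of_nonneg (sub_nonneg.mpr hkk')]
      have : (1 - σ / D) * σ + (σ / D) ^ 2 * D = σ := by field_simp; ring
      nlinarith [min_le_left (1 - σ / D) (n * (σ / D) ^ 2)]
    have hy := shrinkMap_mem hstar hT hk hx
    exact ⟨_, hy, norm_sub_shrinkMap_le hσ hT hD hstar.1 hk.1 hstep hx hy hxσ⟩

lemma exists_norm_sub_le_two_mul (hstar : Starshaped M q) (hT : MapsTo T M M)
    {σ D : ℝ} (hσ : PreservesDistLE T M σ) (hσ0 : 0 < σ) (hσD : σ ≤ D)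
    (hD : ∀ u ∈ M, ∀ v ∈ M, ‖u - v‖ ≤ D) :
    ∃ x ∈ M, ‖x - T x‖ ≤ 2 * σ := by
  have hD0 : 0 < D := hσ0.trans_le hσD
  obtain ⟨N, hN⟩ := exists_nat_ge ((1 - σ / D) / (σ / D) ^ 2)
  obtain ⟨x, hx, hxσ⟩ := exists_norm_sub_shrinkMap_le hstar hT hσ hσ0 hσD hD N
  rw [min_eq_left ((div_le_iff₀ (by positivity)).mp hN)] at hxσ
  have hgap : shrinkMap q T (1 - σ / D) x - T x = (σ / D) • (q - T x) := by
    simp only [shrinkMap]; module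
  have hgapσ : ‖shrinkMap q T (1 - σ / D) x - T x‖ ≤ σ := by
    rw [hgap, norm_smul, Real.norm_of_nonneg (by positivity)]
    calc σ / D * ‖q - T x‖ ≤ σ / D * D := by gcongr; exact hD q hstar.1 _ (hT hx)
      _ = σ := div_mul_cancel₀ σ hD0.ne'
  refine ⟨x, hx, ?_⟩
  calc ‖x - T x‖ ≤ ‖x - shrinkMap q T (1 - σ / D) x‖ + ‖shrinkMap q T (1 - σ / D) x - T x‖ :=
        norm_sub_le_norm_sub_add_norm_sub _ _ _
    _ ≤ 2 * σ := by linarith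

lemma exists_norm_sub_le_of_preservesDistLE (hstar : Starshaped M q) (hT : MapsTo T M M)
    (hM : Bornology.IsBounded M) (hTσ : ∀ ε > 0, ∃ σ ∈ Ioc 0 ε, PreservesDistLE T M σ)
    {ε : ℝ} (hε : 0 < ε) : ∃ x ∈ M, ‖x - T x‖ ≤ ε := by
  obtain ⟨C, hC⟩ := Metric.isBounded_iff.mp hM
  obtain ⟨σ, ⟨hσ0, hσε⟩, hσ⟩ := hTσ (ε / 2) (half_pos hε)
  have hD : ∀ u ∈ M, ∀ v ∈ M, ‖u - v‖ ≤ max C ε := fun u hu v hv =>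
    (dist_eq_norm u v ▸ hC hu hv).trans (le_max_left _ _)
  obtain ⟨x, hx, hxσ⟩ := exists_norm_sub_le_two_mul hstar hT hσ hσ0
    (hσε.trans ((half_le_self hε.le).trans (le_max_right _ _))) hD
  exact ⟨x, hx, by linarith⟩

end

theorem stmt_8_general {X : Type*} [NormedAddCommGroup X] [NormedSpace ℝ X]
    (M : Set X) (q : X) (hstar : Starshaped M q) (T : X → X) (hT : MapsTo T M M)
    (phi : ℝ → ℝ) (hphi : PhiAdmissible phi)
    (γ : ℝ → ℝ) (hγ : GammaAdmissible γ)
    (hcontr : ∀ x ∈ M, ∀ y ∈ M, ∀ k ∈ Ioo (0:ℝ) 1,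
      intPhi phi ‖T x - T y‖ ≤ intPhi phi ((1 / k) * γ ‖x - y‖))
    (hMb : Bornology.IsBounded M) (hMc : IsComplete M) (hTh : Hemicompact T M) :
    ∃ x ∈ M, T x = x := by
  obtain ⟨hphi0, hphiInt, hphiPos⟩ := hphi
  have hscales : ∀ ε > 0, ∃ σ ∈ Ioc 0 ε, PreservesDistLE T M σ := by
    intro ε hε
    have hF0ε : intPhi phi 0 < intPhi phi ε := by simpa [intPhi] using hphiPos ε hε
    obtain ⟨σ, hσ, hFσ⟩ := (monotoneOn_intPhi hphi0 hphiInt).exists_mem_Ioc_forall_lt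
      (continuous_intPhi hphiInt) hε hF0ε
    exact ⟨σ, hσ, preservesDistLE_of_integral_contraction hγ hcontr hσ.1 hFσ⟩
  exact hTh.exists_fixedPoint hMc.isClosed (continuousOn_of_preservesDistLE hscales)
    fun ε hε => exists_norm_sub_le_of_preservesDistLE hstar hT hMb hscales hε

theorem stmt_8 {X : Type*} [NormedAddCommGroup X] [NormedSpace ℝ X]
    (M : Set X) (q : X) (hstar : Starshaped M q) (T : X → X) (hT : MapsTo T M M)
    (phi : ℝ → ℝ) (hphi : PhiAdmissible phi)
    (γ : ℝ → ℝ) (hγ : GammaAdmissible γ) (hγcont : ContinuousOn γ (Ioi 0))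
    (hcontr : ∀ x ∈ M, ∀ y ∈ M, ∀ k ∈ Ioo (0:ℝ) 1,
      intPhi phi ‖T x - T y‖ ≤ intPhi phi ((1 / k) * γ ‖x - y‖))
    (hMb : Bornology.IsBounded M) (hMc : IsComplete M) (hTh : Hemicompact T M) :
    ∃ x ∈ M, T x = x :=
  stmt_8_general M q hstar T hT phi hphi γ hγ hcontr hMb hMc hTh

end
end

section
/- Let M be a closed subset of a real normed space X and S, T : M → M self-mappings with M = S(M). Suppose M has a contractive jointly continuous family ℑ = {f_x : x ∈ M} with contractiveness function Φ : (0,1) → (0,1), the pair (S,T) is a generalized JHℑ-suboperator pair with order n₀ for some n₀ ∈ ℕ, and for all x, y ∈ M and all t ∈ (0,1), ψ(∫₀^{‖Tx−Ty‖} φ(s)ds) ≤ F(ψ(∫₀^{(1/Φ(t))γ(m₄(x,y))} φ(s)ds), φᵤ(∫₀^{(1/Φ(t))γ(m₄(x,y))} φ(s)ds)), where ψ is an altering distance function, φᵤ is an ultra altering distance function, F is a C-class function, and the triple (ψ, φᵤ, F) is monotone. If M is bounded, T and S are continuous, and S is hemicompact, then M ∩ Fix(S) ∩ Fix(T) ≠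 ∅. -/
open MeasureTheory Filter Topology Set

noncomputable section

variable {X : Type*} [NormedAddCommGroup X] [NormedSpace ℝ X]

/-!
For `k ∈ (0,1)`, at a point of coincidence of `S` and `T_k` the quantity `m₄(x,y)` reduces to
`‖Sx − Sy‖`, so the contractive condition together with `‖Sx − Sy‖ ≤ Φ(k)‖Tx − Ty‖` and
`γ(t) < t` shows that `S` and `T_k` have at most one point of coincidence. Hence
`δ(PC(S,T_k)) = 0`, and the JHℑ condition makes that point a common fixed point `x_k` of `S`
and `T_k`. Along `k → 1` hemicompactness of `S` gives a convergent subsequence of `x_k`; its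
limit is fixed by `S` by continuity, and by `T = T_1` by joint continuity of the family.
-/

lemma PhiAdmissible.intPhi_le_intPhi {phi : ℝ → ℝ} (hphi : PhiAdmissible phi) {a b : ℝ}
    (ha : 0 ≤ a) (hab : a ≤ b) : intPhi phi a ≤ intPhi phi b :=
  intervalIntegral.integral_mono_interval le_rfl ha hab
    (ae_restrict_of_forall_mem measurableSet_Ioc fun t ht => hphi.1 t ht.1.le) (hphi.2.1 b)

lemma CClassFun.apply_lt_of_pos {F : ℝ → ℝ → ℝ} {ψ φu : ℝ → ℝ} (hF : CClassFun F)
    (hψ : AlteringDistance ψ) (hφu : UltraAltering φu) {u : ℝ} (hu : 0 < u) :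
    F (ψ u) (φu u) < ψ u := by
  have hψu : 0 ≤ ψ u := by
    simpa [(hψ.2.2 0 le_rfl).2 rfl] using hψ.1 (mem_Ici.2 le_rfl) (mem_Ici.2 hu.le) hu.le
  have hφuu : 0 < φu u := hφu.2.2.1 u hu
  refine (hF.2.1 _ hψu _ hφuu.le).lt_of_ne fun heq => ?_
  rcases hF.2.2 _ hψu _ hφuu.le heq with h | h
  · exact hu.ne' ((hψ.2.2 u hu.le).1 h)
  · exact hφuu.ne' h

lemma lt_of_intPhi_contraction {phi ψ φu : ℝ → ℝ} {F : ℝ → ℝ → ℝ} (hphi : PhiAdmissible phi)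
    (hψ : AlteringDistance ψ) (hφu : UltraAltering φu) (hF : CClassFun F) {a b : ℝ}
    (ha : 0 < a) (h : ψ (intPhi phi b) ≤ F (ψ (intPhi phi a)) (φu (intPhi phi a))) :
    b < a := by
  by_contra! hab
  have hIa : 0 < intPhi phi a := hphi.2.2 a ha
  have hIab : intPhi phi a ≤ intPhi phi b := hphi.intPhi_le_intPhi ha.le hab
  have hψab : ψ (intPhi phi a) ≤ ψ (intPhi phi b) :=
    hψ.1 (mem_Ici.2 hIa.le) (mem_Ici.2 (hIa.le.trans hIab)) hIab
  exact (h.trans_lt (hF.apply_lt_of_pos hψ hφu hIa)).not_ge hψab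

omit [NormedSpace ℝ X] in
lemma m4_eq_of_mem_Yfam {f : X → ℝ → X} {S T : X → X} {x y : X}
    (hx : S x ∈ Yfam f (T x)) (hy : S y ∈ Yfam f (T y)) :
    m4 f S T x y = ‖S x - S y‖ := by
  have hxy : Metric.infDist (S x) (Yfam f (T y)) ≤ ‖S x - S y‖ := by
    simpa [dist_eq_norm] using Metric.infDist_le_dist_of_mem (x := S x) hy
  have hyx : Metric.infDist (S y) (Yfam f (T x)) ≤ ‖S x - S y‖ := by
    simpa [dist_eq_norm, norm_sub_rev] using Metric.infDist_le_dist_of_mem (x := S y) hx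
  rw [m4, Metric.infDist_zero_of_mem hx, Metric.infDist_zero_of_mem hy]
  have hd := norm_nonneg (S x - S y)
  refine le_antisymm ?_ (le_max_of_le_left (le_max_left _ _))
  exact max_le (max_le le_rfl hd) (max_le hd (by linarith))

omit [NormedSpace ℝ X] in
lemma PCset_subsingleton {M : Set X} {S T : X → X} {f : X → ℝ → X} {Phi phi ψ φu γ : ℝ → ℝ}
    {F : ℝ → ℝ → ℝ} (hT : MapsTo T M M) (hcf : ContractiveFamily f M Phi)
    (hphi : PhiAdmissible phi) (hψ : AlteringDistance ψ) (hφu : UltraAltering φu)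
    (hF : CClassFun F) (hγ : GammaAdmissible γ)
    (hcontr : ∀ x ∈ M, ∀ y ∈ M, ∀ t ∈ Ioo (0:ℝ) 1,
      ψ (intPhi phi ‖T x - T y‖) ≤
        F (ψ (intPhi phi ((1 / Phi t) * γ (m4 f S T x y))))
          (φu (intPhi phi ((1 / Phi t) * γ (m4 f S T x y)))))
    {k : ℝ} (hk : k ∈ Ioo (0:ℝ) 1) :
    (PCset S (fun x => f (T x) k) M).Subsingleton := by
  rintro _ ⟨x, hx, rfl, hfx⟩ _ ⟨y, hy, rfl, hfy⟩
  by_contra hne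
  have hd : 0 < ‖S x - S y‖ := norm_pos_iff.2 (sub_ne_zero.2 hne)
  have hPhik := hcf.1 k hk
  have hm4 : m4 f S T x y = ‖S x - S y‖ :=
    m4_eq_of_mem_Yfam ⟨k, Ioo_subset_Icc_self hk, hfx⟩ ⟨k, Ioo_subset_Icc_self hk, hfy⟩
  have hlt : ‖T x - T y‖ < (1 / Phi k) * γ ‖S x - S y‖ := by
    refine lt_of_intPhi_contraction hphi hψ hφu hF ?_ (hm4 ▸ hcontr x hx y hy k hk)
    exact mul_pos (one_div_pos.2 hPhik.1) (hγ.1 _ hd)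
  have hle : ‖S x - S y‖ ≤ Phi k * ‖T x - T y‖ := by
    simpa only [← hfx, ← hfy] using hcf.2 _ (hT hx) _ (hT hy) k hk
  rw [one_div, lt_inv_mul_iff₀ hPhik.1] at hlt
  linarith [hγ.2.2 _ hd]

omit [NormedSpace ℝ X] in
lemma GenJHOp.exists_fixedPoint_of_subsingleton {S T : X → X} {M : Set X} {n : ℕ}
    (h : GenJHOp S T M n) (hn : n ≠ 0) (hPC : (PCset S T M).Subsingleton) :
    ∃ x ∈ M, S x = x ∧ T x = x := by
  obtain ⟨x, hx, hSTx, hdist⟩ := h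
  rw [Metric.diam_subsingleton hPC, zero_pow hn, norm_le_zero_iff, sub_eq_zero] at hdist
  exact ⟨x, hx, hdist, hSTx ▸ hdist⟩

omit [NormedSpace ℝ X] in
lemma Hemicompact.exists_subseq_tendsto_of_fixed {S : X → X} {M : Set X}
    (hS : Hemicompact S M) (hM : IsClosed M) {x : ℕ → X} (hxM : ∀ n, x n ∈ M)
    (hx : ∀ n, S (x n) = x n) :
    ∃ a ∈ M, ∃ g : ℕ → ℕ, StrictMono g ∧ Tendsto (x ∘ g) atTop (𝓝 a) := by
  obtain ⟨a, g, hg, hlim⟩ := hS x hxM (by simp [hx])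
  exact ⟨a, hM.mem_of_tendsto hlim (.of_forall fun n => hxM (g n)), g, hg, hlim⟩

theorem stmt_10_general {X : Type*} [NormedAddCommGroup X] [NormedSpace ℝ X]
    (M : Set X) (hMcl : IsClosed M) (S T : X → X)
    (hT : MapsTo T M M)
    (f : X → ℝ → X) (Phi : ℝ → ℝ)
    (hfam : FamilyOn f M) (hcf : ContractiveFamily f M Phi)
    (hjc : JointlyContinuousFamily f M)
    (phi ψ φu : ℝ → ℝ) (F : ℝ → ℝ → ℝ)
    (hphi : PhiAdmissible phi) (hψ : AlteringDistance ψ) (hφu : UltraAltering φu)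
    (hF : CClassFun F)
    (γ : ℝ → ℝ) (hγ : GammaAdmissible γ)
    (n₀ : ℕ) (hn₀ : 1 ≤ n₀) (hJH : GenJHImSubOp f S T M n₀)
    (hcontr : ∀ x ∈ M, ∀ y ∈ M, ∀ t ∈ Ioo (0:ℝ) 1,
      ψ (intPhi phi ‖T x - T y‖) ≤
        F (ψ (intPhi phi ((1 / Phi t) * γ (m4 f S T x y))))
          (φu (intPhi phi ((1 / Phi t) * γ (m4 f S T x y)))))
    (hTcont : ContinuousOn T M) (hScont : ContinuousOn S M)
    (hSh : Hemicompact S M) :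
    ∃ x ∈ M, S x = x ∧ T x = x := by
  obtain ⟨k, -, hk, hk_lim⟩ := exists_seq_strictMono_tendsto' (zero_lt_one' ℝ)
  have hfixed : ∀ n, ∃ x ∈ M, S x = x ∧ f (T x) (k n) = x := fun n =>
    (hJH _ (Ioo_subset_Icc_self (hk n))).exists_fixedPoint_of_subsingleton
      (Nat.one_le_iff_ne_zero.1 hn₀) (PCset_subsingleton hT hcf hphi hψ hφu hF hγ hcontr (hk n))
  choose x hxM hSx hfx using hfixed
  obtain ⟨a, haM, g, hg, hlim⟩ := hSh.exists_subseq_tendsto_of_fixed hMcl hxM hSx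
  have hlimM : Tendsto (x ∘ g) atTop (𝓝[M] a) :=
    tendsto_nhdsWithin_iff.2 ⟨hlim, .of_forall fun n => hxM (g n)⟩
  refine ⟨a, haM, ?_, ?_⟩
  · refine tendsto_nhds_unique ((hScont a haM).tendsto.comp hlimM) ?_
    simpa [Function.comp_def, hSx] using hlim
  · have hf_lim := hjc (k ∘ g) 1 (fun n => Ioo_subset_Icc_self (hk (g n)))
      (right_mem_Icc.2 zero_le_one) (hk_lim.comp hg.tendsto_atTop) (fun n => T (x (g n))) (T a)
      (fun n => hT (hxM (g n))) (hT haM) ((hTcont a haM).tendsto.comp hlimM)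
    rw [hfam.2 _ (hT haM)] at hf_lim
    exact tendsto_nhds_unique hf_lim (by simpa [Function.comp_def, hfx] using hlim)

theorem stmt_10 {X : Type*} [NormedAddCommGroup X] [NormedSpace ℝ X]
    (M : Set X) (hMcl : IsClosed M) (S T : X → X)
    (hS : MapsTo S M M) (hT : MapsTo T M M) (hSM : S '' M = M)
    (f : X → ℝ → X) (Phi : ℝ → ℝ)
    (hfam : FamilyOn f M) (hcf : ContractiveFamily f M Phi)
    (hjc : JointlyContinuousFamily f M)
    (phi ψ φu : ℝ → ℝ) (F : ℝ → ℝ → ℝ)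
    (hphi : PhiAdmissible phi) (hψ : AlteringDistance ψ) (hφu : UltraAltering φu)
    (hF : CClassFun F) (hmono : MonotoneTriple ψ φu F)
    (γ : ℝ → ℝ) (hγ : GammaAdmissible γ)
    (n₀ : ℕ) (hn₀ : 1 ≤ n₀) (hJH : GenJHImSubOp f S T M n₀)
    (hcontr : ∀ x ∈ M, ∀ y ∈ M, ∀ t ∈ Ioo (0:ℝ) 1,
      ψ (intPhi phi ‖T x - T y‖) ≤
        F (ψ (intPhi phi ((1 / Phi t) * γ (m4 f S T x y))))
          (φu (intPhi phi ((1 / Phi t) * γ (m4 f S T x y)))))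
    (hMb : Bornology.IsBounded M)
    (hTcont : ContinuousOn T M) (hScont : ContinuousOn S M)
    (hSh : Hemicompact S M) :
    ∃ x ∈ M, S x = x ∧ T x = x :=
  stmt_10_general M hMcl S T hT f Phi hfam hcf hjc phi ψ φu F hphi hψ hφu hF γ hγ n₀ hn₀ hJH hcontr
    hTcont hScont hSh

end
end
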